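/- Let f be a ϑ-self-concordant barrier on D_f ⊆ R_{>0}^n, c ∈ R^n, and for η > 0 let C(η) minimize f_η(x) = η⟨c,x⟩ + f(x). For M > 0 define N_M(η) = {x ∈ D_f : f_η(x) − f_η(C(η)) ≤ M}. Then there exist constants 0 < m < 1 < M' depending only on n and M such that for all η > 0 and all x ∈ N_M(η), m·C(η)_i ≤ x_i ≤ M'·C(η)_i for all i ∈ [n]. -/

import Mathlib

/-!
Inside the Dikin ellipsoid at `x`, which lies in the positive orthant, every coordinate keeps its
sign, so `v i ^ 2 ≤ x i ^ 2 ⟨v, H x v⟩`; summing, the Hessian of `f` dominates `1/n` times that of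
the log barrier. Hence `f + (1/n) ∑ log xᵢ` is convex, and its first-order bound, combined with the
optimality condition `g (C η) = -η c`, gives `(1/n) ∑ φ (xᵢ / C(η)ᵢ) ≤ M` for
`φ z = z - 1 - log z`. Since `φ ≥ 0`, each ratio satisfies `φ (xᵢ / C(η)ᵢ) ≤ n M`, which pins it
between `exp (-(n M + 1))` and `2 n M + 2`.
-/

open Real Set Finset

noncomputable def quadForm {n : ℕ} (H : Matrix (Fin n) (Fin n) ℝ) (v : Fin n → ℝ) : ℝ :=
  dotProduct v (H.mulVec v)

lemma quadForm_smul {n : ℕ} (H : Matrix (Fin n) (Fin n) ℝ) (r : ℝ) (v : Fin n → ℝ) :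
    quadForm H (r • v) = r ^ 2 * quadForm H v := by
  simp only [quadForm, Matrix.mulVec_smul, dotProduct_smul, smul_dotProduct, smul_eq_mul]
  ring

section DikinEllipsoid

variable {n : ℕ} {H : Matrix (Fin n) (Fin n) ℝ} {x : Fin n → ℝ}

lemma sq_le_sq_mul_quadForm_of_dikin (hH : H.PosSemidef)
    (hdikin : ∀ y, quadForm H (y - x) < 1 → ∀ i, 0 < y i) (v : Fin n → ℝ) (i : Fin n) :
    v i ^ 2 ≤ x i ^ 2 * quadForm H v := by
  rcases eq_or_ne (v i) 0 with hvi | hvi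
  · rw [hvi, sq, zero_mul]
    exact mul_nonneg (sq_nonneg _) (hH.dotProduct_mulVec_nonneg v)
  by_contra! hlt
  set s := x i / v i
  -- `x ± s • v` lies in the ellipsoid, but one of its `i`-th coordinates is `x i - x i = 0`.
  have hmem : ∀ r : ℝ, r ^ 2 = 1 → quadForm H ((x + (r * s) • v) - x) < 1 := by
    intro r hr
    rw [add_sub_cancel_left, quadForm_smul, mul_pow, hr, one_mul, div_pow,
      div_mul_eq_mul_div, div_lt_one (by positivity)]
    exact hlt
  have hplus := hdikin _ (hmem 1 (by norm_num)) i
  have hminus := hdikin _ (hmem (-1) (by norm_num)) i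
  have hsv : s * v i = x i := div_mul_cancel₀ _ hvi
  simp only [Pi.add_apply, Pi.smul_apply, smul_eq_mul, mul_assoc, hsv] at hplus hminus
  linarith

lemma sum_sq_div_sq_le_card_mul_quadForm_of_dikin (hH : H.PosSemidef)
    (hdikin : ∀ y, quadForm H (y - x) < 1 → ∀ i, 0 < y i) (v : Fin n → ℝ) :
    ∑ i, v i ^ 2 / x i ^ 2 ≤ n * quadForm H v := by
  have hx : ∀ i, 0 < x i := hdikin x (by simp [quadForm])
  calc ∑ i, v i ^ 2 / x i ^ 2 ≤ ∑ _i : Fin n, quadForm H v :=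
        sum_le_sum fun i _ => by
          rw [div_le_iff₀' (pow_pos (hx i) 2)]
          exact sq_le_sq_mul_quadForm_of_dikin hH hdikin v i
    _ = n * quadForm H v := by simp

end DikinEllipsoid

lemma add_deriv_le_of_deriv2_nonneg {φ φ' φ'' : ℝ → ℝ}
    (hφ : ∀ t ∈ Icc (0 : ℝ) 1, HasDerivAt φ (φ' t) t)
    (hφ' : ∀ t ∈ Icc (0 : ℝ) 1, HasDerivAt φ' (φ'' t) t)
    (hφ'' : ∀ t ∈ Icc (0 : ℝ) 1, 0 ≤ φ'' t) :
    φ 0 + φ' 0 ≤ φ 1 := by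
  have hmono : MonotoneOn φ' (Icc 0 1) := by
    refine monotoneOn_of_hasDerivWithinAt_nonneg (convex_Icc 0 1)
      (fun t ht => (hφ' t ht).continuousAt.continuousWithinAt) (fun t ht => ?_)
      (fun t ht => hφ'' t (interior_subset ht))
    exact (hφ' t (interior_subset ht)).hasDerivWithinAt
  obtain ⟨ξ, hξ, hslope⟩ := exists_hasDerivAt_eq_slope φ φ' zero_lt_one
    (fun t ht => (hφ t ht).continuousAt.continuousWithinAt)
    (fun t ht => hφ t (Ioo_subset_Icc_self ht))
  have := hmono (left_mem_Icc.2 zero_le_one) (Ioo_subset_Icc_self hξ) hξ.1.le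
  rw [hslope, sub_zero, div_one] at this
  linarith

lemma HasDerivAt.comp_line {E F : Type*} [NormedAddCommGroup E] [NormedSpace ℝ E]
    [NormedAddCommGroup F] [NormedSpace ℝ F] {u : E → F} {x a : E} {t : ℝ}
    (hu : DifferentiableAt ℝ u (x + t • a)) :
    HasDerivAt (fun s : ℝ => u (x + s • a)) (fderiv ℝ u (x + t • a) a) t := by
  have := hu.hasFDerivAt.comp_hasDerivAt t (((hasDerivAt_id t).smul_const a).const_add x)
  rwa [one_smul] at this

section Barrier

variable {n : ℕ} {D : Set (Fin n → ℝ)} {f : (Fin n → ℝ) → ℝ} {g : (Fin n → ℝ) → (Fin n → ℝ)}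
  {H : (Fin n → ℝ) → Matrix (Fin n) (Fin n) ℝ}

lemma hasDerivAt_comp_line_of_gradient (hD : IsOpen D) (hf : ContDiffOn ℝ 2 f D)
    (hg : ∀ x ∈ D, ∀ v, fderiv ℝ f x v = dotProduct (g x) v)
    {x a : Fin n → ℝ} {t : ℝ} (hxt : x + t • a ∈ D) :
    HasDerivAt (fun s => f (x + s • a)) (dotProduct (g (x + t • a)) a) t := by
  rw [← hg _ hxt]
  exact HasDerivAt.comp_line ((hf.differentiableOn (by norm_num)).differentiableAt
    (hD.mem_nhds hxt))

lemma hasDerivAt_gradient_comp_line_of_hessian (hD : IsOpen D) (hf : ContDiffOn ℝ 2 f D)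
    (hg : ∀ x ∈ D, ∀ v, fderiv ℝ f x v = dotProduct (g x) v)
    (hH : ∀ x ∈ D, ∀ v w, fderiv ℝ (fun y => dotProduct (g y) v) x w =
      dotProduct v ((H x).mulVec w))
    {x a : Fin n → ℝ} {t : ℝ} (hxt : x + t • a ∈ D) :
    HasDerivAt (fun s => dotProduct (g (x + s • a)) a) (quadForm (H (x + t • a)) a) t := by
  rw [quadForm, ← hH _ hxt]
  refine HasDerivAt.comp_line (u := fun y => dotProduct (g y) a) ?_
  have hf' : ContDiffOn ℝ 1 (fderiv ℝ f) D := hf.fderiv_of_isOpen hD (by norm_num)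
  have hdf : DifferentiableAt ℝ (fun y => fderiv ℝ f y a) (x + t • a) :=
    ((hf'.differentiableOn one_ne_zero).differentiableAt (hD.mem_nhds hxt)).clm_apply
      (differentiableAt_const a)
  exact hdf.congr_of_eventuallyEq
    (Filter.eventuallyEq_of_mem (hD.mem_nhds hxt) fun y hy => (hg y hy a).symm)

/-- The first-order bound for the convex function `n f + ∑ log xᵢ`. -/
lemma card_mul_dotProduct_add_sum_le_card_mul_sub (hD : IsOpen D) (hconv : Convex ℝ D)
    (hpos : ∀ x ∈ D, ∀ i, 0 < x i) (hf : ContDiffOn ℝ 2 f D)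
    (hg : ∀ x ∈ D, ∀ v, fderiv ℝ f x v = dotProduct (g x) v)
    (hH : ∀ x ∈ D, ∀ v w, fderiv ℝ (fun y => dotProduct (g y) v) x w =
      dotProduct v ((H x).mulVec w))
    (hpsd : ∀ x ∈ D, (H x).PosSemidef)
    (hdikin : ∀ x ∈ D, ∀ y, quadForm (H x) (y - x) < 1 → ∀ i, 0 < y i)
    {x y : Fin n → ℝ} (hx : x ∈ D) (hy : y ∈ D) :
    n * dotProduct (g x) (y - x) + ∑ i, (y i / x i - 1 - log (y i / x i)) ≤
      n * (f y - f x) := by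
  set a := y - x
  have hseg : ∀ t ∈ Icc (0 : ℝ) 1, x + t • a ∈ D := fun t ht => by
    convert hconv hx hy (sub_nonneg.2 ht.2) ht.1 (sub_add_cancel 1 t) using 1
    simp only [a, smul_sub, sub_smul, one_smul]
    abel
  have hcoord : ∀ t ∈ Icc (0 : ℝ) 1, ∀ i, 0 < x i + t * a i := fun t ht i => by
    simpa using hpos _ (hseg t ht) i
  have hline : ∀ i t, HasDerivAt (fun s => x i + s * a i) (a i) t := fun i t => by
    simpa using ((hasDerivAt_id t).mul_const (a i)).const_add (x i)
  have key := add_deriv_le_of_deriv2_nonneg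
    (φ := fun t => n * f (x + t • a) + ∑ i, log (x i + t * a i))
    (φ' := fun t => n * dotProduct (g (x + t • a)) a + ∑ i, a i / (x i + t * a i))
    (φ'' := fun t => n * quadForm (H (x + t • a)) a - ∑ i, a i ^ 2 / (x i + t * a i) ^ 2)
    (fun t ht => ((hasDerivAt_comp_line_of_gradient hD hf hg (hseg t ht)).const_mul _).add
      (HasDerivAt.fun_sum fun i _ => (hline i t).log (hcoord t ht i).ne'))
    (fun t ht => by
      refine ((hasDerivAt_gradient_comp_line_of_hessian hD hf hg hH (hseg t ht)).const_mul
        _).add (HasDerivAt.fun_sum fun i _ => ((hline i t).inv (hcoord t ht i).ne').const_mul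
          (a i)) |>.congr_deriv ?_
      simp only [sub_eq_add_neg, ← sum_neg_distrib]
      congr 1
      exact sum_congr rfl fun i _ => by ring)
    (fun t ht => by
      have := sum_sq_div_sq_le_card_mul_quadForm_of_dikin
        (hpsd _ (hseg t ht)) (hdikin _ (hseg t ht)) a
      simp only [Pi.add_apply, Pi.smul_apply, smul_eq_mul] at this
      linarith)
  have hxy : x + a = y := add_sub_cancel x y
  have hxy' : ∀ i, x i + a i = y i := fun i => by rw [← hxy, Pi.add_apply]
  have hratio : ∀ i, y i / x i - 1 - log (y i / x i) = a i / x i + log (x i) - log (y i) :=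
    fun i => by
      rw [log_div (hpos y hy i).ne' (hpos x hx i).ne', ← hxy' i]
      field_simp [(hpos x hx i).ne']
      ring
  simp only [zero_smul, add_zero, one_smul, zero_mul, one_mul, hxy, hxy'] at key
  rw [sum_congr rfl fun i _ => hratio i, sum_sub_distrib, sum_add_distrib]
  linarith

end Barrier

lemma dotProduct_gradient_eq_of_isMinOn {n : ℕ} {D : Set (Fin n → ℝ)} {f : (Fin n → ℝ) → ℝ}
    {g : (Fin n → ℝ) → (Fin n → ℝ)} (hD : IsOpen D) (hf : ContDiffOn ℝ 2 f D)
    (hg : ∀ x ∈ D, ∀ v, fderiv ℝ f x v = dotProduct (g x) v)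
    {c z : Fin n → ℝ} {η : ℝ} (hz : z ∈ D)
    (hmin : IsMinOn (fun y => η * dotProduct c y + f y) D z) (v : Fin n → ℝ) :
    dotProduct (g z) v = -(η * dotProduct c v) := by
  have hloc : IsLocalMin (fun s : ℝ => η * dotProduct c (z + s • v) + f (z + s • v)) 0 := by
    refine IsLocalMin.comp_continuous (f := fun y => η * dotProduct c y + f y)
      (g := fun s : ℝ => z + s • v) (b := 0) ?_ (by fun_prop)
    simpa using hmin.isLocalMin (hD.mem_nhds hz)
  have hlin : HasDerivAt (fun s : ℝ => η * dotProduct c (z + s • v)) (η * dotProduct c v) 0 := by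
    have hexp : (fun s : ℝ => η * dotProduct c (z + s • v)) =
        fun s => η * dotProduct c z + s * (η * dotProduct c v) := by
      ext s
      simp only [dotProduct_add, dotProduct_smul, smul_eq_mul]
      ring
    rw [hexp]
    simpa using ((hasDerivAt_id (0 : ℝ)).mul_const (η * dotProduct c v)).const_add
      (η * dotProduct c z)
  have hz0 : z + (0 : ℝ) • v ∈ D := by simpa using hz
  have := hloc.hasDerivAt_eq_zero (hlin.add (hasDerivAt_comp_line_of_gradient hD hf hg hz0))
  simp only [zero_smul, add_zero] at this
  linarith

lemma exp_neg_le_and_le_of_sub_one_sub_log_le {z K : ℝ} (hz : 0 < z)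
    (h : z - 1 - log z ≤ K) : exp (-(K + 1)) ≤ z ∧ z ≤ 2 * K + 2 := by
  constructor
  · rw [← exp_log hz, exp_le_exp]
    linarith
  · -- `log z = log (z / 2) + log 2 ≤ z / 2 - 1 + 1`
    have h₁ := log_le_sub_one_of_pos (half_pos hz)
    have h₂ := log_two_lt_d9
    rw [log_div hz.ne' two_ne_zero] at h₁
    norm_num at h₂
    linarith

/-- the value neighborhoods `N_M(η)` of the central path of a
self-concordant barrier over a domain in the positive orthant are contained in
multiplicative neighborhoods `M_{m,M'}(η)`, with `m, M'` depending only on `n` and `M`. -/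
theorem stmt10 (n : ℕ) (M : ℝ) (hM : 0 < M) :
    ∃ m M' : ℝ, 0 < m ∧ m < 1 ∧ 1 < M' ∧
      ∀ (D : Set (Fin n → ℝ)) (f : (Fin n → ℝ) → ℝ)
        (g : (Fin n → ℝ) → (Fin n → ℝ))
        (H : (Fin n → ℝ) → Matrix (Fin n) (Fin n) ℝ)
        (c : Fin n → ℝ) (C : ℝ → Fin n → ℝ),
        IsOpen D → Convex ℝ D → (∀ x ∈ D, ∀ i, 0 < x i) →
        ContDiffOn ℝ 2 f D →
        (∀ x ∈ D, ∀ v : Fin n → ℝ, fderiv ℝ f x v = dotProduct (g x) v) →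
        (∀ x ∈ D, ∀ v w : Fin n → ℝ,
          fderiv ℝ (fun y => dotProduct (g y) v) x w =
            dotProduct v ((H x).mulVec w)) →
        (∀ x ∈ D, (H x).PosDef) →
        (∀ x ∈ D, ∀ y : Fin n → ℝ, quadForm (H x) (y - x) < 1 → y ∈ D) →
        (∀ x ∈ D, ∀ y : Fin n → ℝ, quadForm (H x) (y - x) < 1 →
          ∀ v : Fin n → ℝ, v ≠ 0 →
            1 - Real.sqrt (quadForm (H x) (y - x)) ≤
                Real.sqrt (quadForm (H y) v) / Real.sqrt (quadForm (H x) v) ∧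
            Real.sqrt (quadForm (H y) v) / Real.sqrt (quadForm (H x) v) ≤
                1 / (1 - Real.sqrt (quadForm (H x) (y - x)))) →
        (∀ η : ℝ, 0 < η → C η ∈ D ∧
          ∀ y ∈ D, η * dotProduct c (C η) + f (C η) ≤
            η * dotProduct c y + f y) →
        ∀ η : ℝ, 0 < η → ∀ x ∈ D,
          (η * dotProduct c x + f x) - (η * dotProduct c (C η) + f (C η)) ≤ M →
          ∀ i, m * C η i ≤ x i ∧ x i ≤ M' * C η i := by
  have hnM : 0 ≤ (n : ℝ) * M := by positivity
  refine ⟨exp (-(n * M + 1)), 2 * n * M + 2, exp_pos _, exp_lt_one_iff.2 (by linarith),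
    by linarith, ?_⟩
  intro D f g H c C hD hconv hpos hf hg hH hPD hDik _ hopt η hη x hx hval i
  obtain ⟨hC, hmin⟩ := hopt η hη
  have hCpos := hpos _ hC
  have hbound := card_mul_dotProduct_add_sum_le_card_mul_sub hD hconv hpos hf hg hH
    (fun z hz => (hPD z hz).posSemidef) (fun z hz y hy => hpos y (hDik z hz y hy)) hC hx
  rw [dotProduct_gradient_eq_of_isMinOn hD hf hg hC (isMinOn_iff.2 hmin), dotProduct_sub]
    at hbound
  have hsum : ∑ j, (x j / C η j - 1 - log (x j / C η j)) ≤ n * M := by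
    linarith [mul_le_mul_of_nonneg_left hval n.cast_nonneg]
  have hφ_nonneg : ∀ j, 0 ≤ x j / C η j - 1 - log (x j / C η j) := fun j => by
    linarith [log_le_sub_one_of_pos (div_pos (hpos x hx j) (hCpos j))]
  obtain ⟨hlow, hup⟩ := exp_neg_le_and_le_of_sub_one_sub_log_le (div_pos (hpos x hx i) (hCpos i))
    ((single_le_sum (fun j _ => hφ_nonneg j) (mem_univ i)).trans hsum)
  rw [le_div_iff₀ (hCpos i)] at hlow
  rw [div_le_iff₀ (hCpos i)] at hup
  exact ⟨hlow, by linarith⟩
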